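/- arXiv:1803.05643 — 2 statements merged into one kernel-verified Lean document; each statement's English description precedes it below -/
import Mathlib

section
/- For every ε > 0 there exists a constant c = c(ε) > 0 such that every finite simple graph with N ≥ 2 vertices and at least (1+ε)·N edges contains a cycle of length at most c·log N. (Consequence of the Moore bound of Alon, Hoory and Linial.) -/
/-!
If every cycle of `G` is longer than `2R + 2` and `|V| < q ^ R`, then `|E| ≤ q |V|`. Indeed, the
closed balls `B_k` of radius `k` around a vertex `v` (Mathlib's open balls `G.ball v (k + 1)`)
cannot grow by a factor `q` at each of the first `R` steps, so `|B_{r+1}| < q |B_r|` for some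
`r < R`. Charge each edge meeting `B_r` to an endpoint farthest from `v`; that endpoint lies in
`B_{r+1}`, and no vertex is charged twice, since two edges from `u` to vertices no farther than `u`
close up, through shortest walks to `v`, into a cycle of length at most `2r + 2`. Hence at most
`|B_{r+1}| < q |B_r|` edges meet `B_r`, and deleting `B_r` and inducting on `|V|` gives the bound.
With `q = 1 + ε/2` and `R ≈ log N / log q` the bound contradicts `|E| ≥ (1 + ε) N`, so there is a
cycle of length at most `2R + 2 = O(log N)`.
-/

theorem exists_lt_mul_of_lt_pow {b : ℕ → ℝ} {q : ℝ} {R : ℕ} (hq : 0 ≤ q)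
    (h0 : 1 ≤ b 0) (hR : b R < q ^ R) : ∃ r < R, b (r + 1) < q * b r := by
  by_contra! h
  have hgrowth : ∀ k ≤ R, q ^ k ≤ b k := by
    intro k
    induction k with
    | zero => simpa using h0
    | succ k ih =>
      intro hk
      calc q ^ (k + 1) = q * q ^ k := pow_succ' q k
        _ ≤ q * b k := mul_le_mul_of_nonneg_left (ih (by omega)) hq
        _ ≤ b (k + 1) := h k (by omega)
  exact (hgrowth R le_rfl).not_gt hR

theorem exists_lt_pow_le_log_div_log_add_one {q N : ℝ} (hq : 1 < q) (hN : 1 ≤ N) :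
    ∃ R : ℕ, N < q ^ R ∧ (R : ℝ) ≤ Real.log N / Real.log q + 1 := by
  have hlogq : 0 < Real.log q := Real.log_pos hq
  have hL : 0 ≤ Real.log N / Real.log q := div_nonneg (Real.log_nonneg hN) hlogq.le
  refine ⟨⌊Real.log N / Real.log q⌋₊ + 1, ?_, ?_⟩
  · rw [← Real.log_lt_log_iff (by linarith) (by positivity), Real.log_pow,
      ← div_lt_iff₀ hlogq]
    exact_mod_cast Nat.lt_floor_add_one _
  · push_cast
    linarith [Nat.floor_le hL]

namespace SimpleGraph

variable {V : Type*} {G : SimpleGraph V}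

theorem edist_le_edist_add_one_of_adj {a b v : V} (h : G.Adj a b) :
    G.edist a v ≤ G.edist b v + 1 :=
  calc G.edist a v ≤ G.edist a b + G.edist b v := G.edist_triangle
    _ = G.edist b v + 1 := by rw [edist_eq_one_iff_adj.mpr h, add_comm]

theorem Walk.notMem_support_of_length_eq_edist {u x v : V} (p : G.Walk x v)
    (hp : p.length = G.edist x v) (hux : u ≠ x) (hd : G.edist x v ≤ G.edist u v) :
    u ∉ p.support := by
  classical
  intro hu
  have hlt : ((p.dropUntil u hu).length : ℕ∞) < p.length :=
    Nat.cast_lt.mpr (p.length_dropUntil_lt_length hu hux)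
  exact ((p.dropUntil u hu).edist_le.trans_lt hlt).not_ge (hp ▸ hd)

theorem egirth_le_edist_add_edist_add_two {u x y v : V} (hux : G.Adj u x) (huy : G.Adj u y)
    (hxy : x ≠ y) (hx : G.edist x v ≤ G.edist u v) (hy : G.edist y v ≤ G.edist u v) :
    G.egirth ≤ G.edist x v + G.edist y v + 2 := by
  classical
  by_cases hxv : G.edist x v = ⊤
  · simp [hxv]
  by_cases hyv : G.edist y v = ⊤
  · simp [hyv]
  obtain ⟨p, hp⟩ := (reachable_of_edist_ne_top hxv).exists_walk_length_eq_edist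
  obtain ⟨q, hq⟩ := (reachable_of_edist_ne_top hyv).exists_walk_length_eq_edist
  have hup := p.notMem_support_of_length_eq_edist hp hux.ne hx
  have huq := q.notMem_support_of_length_eq_edist hq huy.ne hy
  set P := (p.append q.reverse).bypass
  have huP : u ∉ P.support := fun h ↦ by
    simpa [hup, huq] using (p.append q.reverse).support_bypass_subset_support h
  have hcycle : (Walk.cons hux (P.concat huy.symm)).IsCycle := by
    refine (Walk.cons_isCycle_iff _ _).mpr
      ⟨(p.append q.reverse).bypass_isPath.concat huP _, ?_⟩
    rw [Walk.edges_concat, List.concat_eq_append, List.mem_append, List.mem_singleton, not_or]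
    exact ⟨fun h ↦ huP (P.fst_mem_support_of_mem_edges h), by simp [hux.ne', hxy]⟩
  have hP : P.length ≤ (p.append q.reverse).length :=
    (p.append q.reverse).length_bypass_le_length
  calc G.egirth ≤ (Walk.cons hux (P.concat huy.symm)).length := egirth_le_length hcycle
    _ ≤ (p.append q.reverse).length + 2 := by
      simp only [Walk.length_cons, Walk.length_concat]
      exact_mod_cast (by omega : P.length + 1 + 1 ≤ (p.append q.reverse).length + 2)
    _ = G.edist x v + G.edist y v + 2 := by simp [hp, hq]

theorem Adj.exists_farthest_mem_ball {a b v : V} {r : ℕ} (hab : G.Adj a b)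
    (ha : a ∈ G.ball v (r + 1 : ℕ)) :
    ∃ u ∈ s(a, b), (∀ w ∈ s(a, b), G.edist w v ≤ G.edist u v) ∧
      u ∈ G.ball v (r + 2 : ℕ) := by
  rw [mem_ball, Nat.cast_add_one] at ha
  by_cases hba : G.edist b v ≤ G.edist a v
  · refine ⟨a, Sym2.mem_mk_left a b, by simp [hba], ha.trans_le ?_⟩
    push_cast
    gcongr
    norm_num
  · refine ⟨b, Sym2.mem_mk_right a b, by simp [(not_le.mp hba).le], ?_⟩
    calc G.edist b v ≤ G.edist a v + 1 := edist_le_edist_add_one_of_adj hab.symm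
      _ < r + 1 + 1 := (ENat.add_lt_add_iff_right ENat.one_ne_top).mpr ha
      _ = (r + 2 : ℕ) := by push_cast; rw [add_assoc, one_add_one_eq_two]

theorem ncard_edges_meeting_ball_le [Finite V] (v : V) (r : ℕ)
    (hr : (2 * r + 2 : ℕ) < G.egirth) :
    {e ∈ G.edgeSet | ∃ a ∈ e, a ∈ G.ball v (r + 1 : ℕ)}.ncard ≤
      (G.ball v (r + 2 : ℕ)).ncard := by
  classical
  have hclose : ∀ u x, G.edist x v ≤ G.edist u v →
      (∃ a ∈ s(u, x), a ∈ G.ball v (r + 1 : ℕ)) → G.edist x v ≤ r := by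
    rintro u x hxu ⟨a, ha, haB⟩
    rw [mem_ball, Nat.cast_add_one, ENat.lt_add_one_iff (ENat.natCast_ne_top r)] at haB
    rcases Sym2.mem_iff.mp ha with rfl | rfl
    · exact hxu.trans haB
    · exact haB
  rw [Set.ncard_eq_toFinset_card _, Set.ncard_eq_toFinset_card _]
  refine Finset.card_le_card_of_forall_subsingleton
    (fun e u ↦ u ∈ e ∧ ∀ w ∈ e, G.edist w v ≤ G.edist u v) ?_ ?_
  · intro e he
    simp only [Set.Finite.mem_toFinset, Set.mem_ofPred_eq] at he
    obtain ⟨heE, a, hae, haB⟩ := he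
    obtain ⟨b, rfl⟩ := Sym2.mem_iff_exists.mp hae
    obtain ⟨u, hu, hmax, huB⟩ := Adj.exists_farthest_mem_ball heE haB
    exact ⟨u, (Set.Finite.mem_toFinset _).mpr huB, hu, hmax⟩
  · intro u _ e₁ he₁ e₂ he₂
    simp only [Set.Finite.mem_toFinset, Set.mem_ofPred_eq] at he₁ he₂
    obtain ⟨⟨he₁E, he₁B⟩, hue₁, hmax₁⟩ := he₁
    obtain ⟨⟨he₂E, he₂B⟩, hue₂, hmax₂⟩ := he₂
    obtain ⟨x, rfl⟩ := Sym2.mem_iff_exists.mp hue₁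
    obtain ⟨y, rfl⟩ := Sym2.mem_iff_exists.mp hue₂
    by_contra hne
    have hxy : x ≠ y := by rintro rfl; exact hne rfl
    have hx := hmax₁ x (Sym2.mem_mk_right u x)
    have hy := hmax₂ y (Sym2.mem_mk_right u y)
    have hshort : G.egirth ≤ r + r + 2 :=
      (egirth_le_edist_add_edist_add_two he₁E he₂E hxy hx hy).trans
        (by gcongr; exacts [hclose u x hx he₁B, hclose u y hy he₂B])
    exact hshort.not_gt (by push_cast at hr; rwa [← two_mul])

theorem ncard_edgeSet_le_ncard_meeting_add_ncard_induce_compl [Finite V] (s : Set V) :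
    G.edgeSet.ncard ≤
      {e ∈ G.edgeSet | ∃ a ∈ e, a ∈ s}.ncard + (G.induce sᶜ).edgeSet.ncard := by
  have hcover : G.edgeSet ⊆
      {e ∈ G.edgeSet | ∃ a ∈ e, a ∈ s} ∪ Sym2.map (↑) '' (G.induce sᶜ).edgeSet := by
    intro e he
    by_cases hs : ∃ a ∈ e, a ∈ s
    · exact Or.inl ⟨he, hs⟩
    · induction e using Sym2.ind with
      | _ a b =>
        push Not at hs
        exact Or.inr ⟨s(⟨a, hs a (Sym2.mem_mk_left a b)⟩,
          ⟨b, hs b (Sym2.mem_mk_right a b)⟩), he, rfl⟩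
  calc G.edgeSet.ncard
      ≤ ({e ∈ G.edgeSet | ∃ a ∈ e, a ∈ s} ∪
          Sym2.map (↑) '' (G.induce sᶜ).edgeSet).ncard := Set.ncard_le_ncard hcover
    _ ≤ _ := Set.ncard_union_le _ _
    _ ≤ _ := by grw [Set.ncard_image_le]

theorem ncard_edgeSet_le_mul_of_lt_pow {q : ℝ} (hq : 0 ≤ q) {R : ℕ} {V : Type*} [Finite V]
    (G : SimpleGraph V) (hV : (Nat.card V : ℝ) < q ^ R) (hG : (2 * R + 2 : ℕ) < G.egirth) :
    (G.edgeSet.ncard : ℝ) ≤ q * Nat.card V := by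
  induction hn : Nat.card V using Nat.strong_induction_on generalizing V with
  | _ n ih =>
  subst hn
  rcases isEmpty_or_nonempty V with hV | ⟨⟨v⟩⟩
  · simp [Set.eq_empty_of_isEmpty]
  obtain ⟨r, hrR, hstall⟩ :=
    exists_lt_mul_of_lt_pow (b := fun k ↦ (G.ball v (k + 1 : ℕ)).ncard) hq (by simp)
      ((Nat.cast_le.mpr (Set.ncard_le_card _)).trans_lt hV)
  set B := G.ball v (r + 1 : ℕ)
  have hsplit : (B.ncard : ℝ) + Nat.card ↥Bᶜ = Nat.card V := by
    rw [Nat.card_coe_set_eq]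
    exact_mod_cast Set.ncard_add_ncard_compl B
  have hB : 0 < B.ncard := (Set.ncard_pos).mpr ⟨v, mem_ball_self (by simp)⟩
  have hmeet := ncard_edges_meeting_ball_le v r (lt_of_le_of_lt (by gcongr) hG)
  have hrest := ih (Nat.card ↥Bᶜ)
    (by rw [Nat.card_coe_set_eq, ← Set.ncard_add_ncard_compl B]; omega) (G.induce Bᶜ)
    ((Nat.cast_le.mpr (Finite.card_subtype_le _)).trans_lt hV)
    (hG.trans_le (IsContained.egirth_le ⟨Copy.induce G Bᶜ⟩)) rfl
  calc (G.edgeSet.ncard : ℝ)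
      ≤ {e ∈ G.edgeSet | ∃ a ∈ e, a ∈ B}.ncard + (G.induce Bᶜ).edgeSet.ncard := by
        exact_mod_cast ncard_edgeSet_le_ncard_meeting_add_ncard_induce_compl B
    _ ≤ (G.ball v (r + 2 : ℕ)).ncard + q * Nat.card ↥Bᶜ :=
        add_le_add (by exact_mod_cast hmeet) hrest
    _ ≤ q * B.ncard + q * Nat.card ↥Bᶜ := by gcongr
    _ = q * Nat.card V := by rw [← mul_add, hsplit]

end SimpleGraph

/-- Consequence of the Moore bound of Alon, Hoory and Linial: for every `ε > 0`
there is `c = c(ε) > 0` such that every finite simple graph with `N ≥ 2`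
vertices and at least `(1+ε)·N` edges contains a cycle of length at most
`c·log N`. -/
theorem exists_short_cycle (ε : ℝ) (hε : 0 < ε) :
    ∃ c : ℝ, 0 < c ∧
      ∀ (V : Type) [Fintype V] [DecidableEq V]
        (G : SimpleGraph V) [DecidableRel G.Adj],
        2 ≤ Fintype.card V →
        (1 + ε) * Fintype.card V ≤ (G.edgeFinset.card : ℝ) →
        ∃ (v : V) (w : G.Walk v v), w.IsCycle ∧
          (w.length : ℝ) ≤ c * Real.log (Fintype.card V) := by
  have hlogq : 0 < Real.log (1 + ε / 2) := Real.log_pos (by linarith)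
  have hlog2 : 0 < Real.log 2 := Real.log_pos one_lt_two
  refine ⟨2 / Real.log (1 + ε / 2) + 4 / Real.log 2, by positivity, ?_⟩
  intro V _ _ G _ hN hE
  have hN2 : (2 : ℝ) ≤ Fintype.card V := by exact_mod_cast hN
  set N : ℝ := (Fintype.card V : ℝ)
  obtain ⟨R, hNR, hR⟩ :=
    exists_lt_pow_le_log_div_log_add_one (q := 1 + ε / 2) (N := N) (by linarith) (by linarith)
  have hgirth : G.egirth ≤ (2 * R + 2 : ℕ) := by
    by_contra! h
    have := G.ncard_edgeSet_le_mul_of_lt_pow (q := 1 + ε / 2) (by linarith)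
      (by rwa [Nat.card_eq_fintype_card]) h
    rw [Nat.card_eq_fintype_card, ← SimpleGraph.coe_edgeFinset, Set.ncard_coe_finset] at this
    nlinarith
  obtain ⟨v, w, hw, hlen⟩ := (SimpleGraph.exists_egirth_eq_length (G := G)).mpr fun hacyc ↦
    WithTop.not_top_le_coe _ (hacyc.egirth_eq_top ▸ hgirth)
  refine ⟨v, w, hw, ?_⟩
  have hwR : w.length ≤ 2 * R + 2 := by exact_mod_cast hlen ▸ hgirth
  have hlogN : 4 ≤ 4 / Real.log 2 * Real.log N := by
    rw [div_mul_eq_mul_div, le_div_iff₀ hlog2]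
    linarith [Real.log_le_log two_pos hN2]
  calc (w.length : ℝ) ≤ 2 * R + 2 := by exact_mod_cast hwR
    _ ≤ 2 / Real.log (1 + ε / 2) * Real.log N + 4 := by
      rw [div_mul_eq_mul_div, mul_div_assoc]
      linarith
    _ ≤ _ := by linarith
end

section
/- (Gilbert–Varshamov existence of asymptotically good codes.) For every δ ∈ (0, 1/2) and every ε > 0, for all sufficiently large N there exists a binary linear code C ⊆ F_2^N with dim C ≥ (1 − H(δ) − ε)·N and dist(C) ≥ δ·N, where H(δ) = −δ·log₂δ − (1−δ)·log₂(1−δ) is the binary entropy function. In particular, there exist families of asymptotically good binary linear codes. -/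
open Finset Module

/-- The binary entropy function `H(δ) = −δ·log₂ δ − (1−δ)·log₂(1−δ)`. -/
noncomputable def binaryEntropy (δ : ℝ) : ℝ :=
  -δ * Real.logb 2 δ - (1 - δ) * Real.logb 2 (1 - δ)

/-!
Varshamov's greedy construction: a linear code of dimension `k` whose nonzero words all have
weight `> r` can be enlarged by any vector outside the radius-`r` balls around its codewords, and
such a vector exists as long as `q ^ k · |B_r| < q ^ N`. For `δ ≤ 1/2` the ball of radius `δN` in
`𝔽₂^N` has at most `2 ^ (H(δ) N)` points: every `i ≤ δN` has `δ^i (1-δ)^(N-i) ≥ 2 ^ (-H(δ) N)`,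
and these weights times `N.choose i` sum to at most `(δ + (1 - δ)) ^ N = 1`. So dimension
`⌊(1 - H(δ)) N⌋` is reachable with distance `> δN`, and `δ = 1/4`, where `H(δ) < 1`, gives an
asymptotically good family.
-/

open scoped Pointwise

section HammingBall

variable {ι K : Type*} [Fintype ι] [DecidableEq ι] [Fintype K] [DecidableEq K]

def hammingBall [Zero K] (r : ℕ) : Finset (ι → K) := {y | hammingNorm y ≤ r}

theorem card_hammingBall_zmod_two_le (r : ℕ) :
    #(hammingBall r : Finset (ι → ZMod 2)) ≤ ∑ i ∈ range (r + 1), (Fintype.card ι).choose i := by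
  have support_injOn : Set.InjOn (fun y : ι → ZMod 2 => ({i | y i ≠ 0} : Finset ι))
      ↑(hammingBall r : Finset (ι → ZMod 2)) := by
    intro x _ y _ hxy
    have binary : ∀ a b : ZMod 2, (a ≠ 0 ↔ b ≠ 0) → a = b := by decide
    funext i
    simpa using binary _ _ (by simpa using Finset.ext_iff.mp hxy i)
  calc #(hammingBall r : Finset (ι → ZMod 2))
      ≤ #((range (r + 1)).biUnion fun i => powersetCard i (univ : Finset ι)) := by
        refine card_le_card_of_injOn _ (fun y hy => ?_) support_injOn
        simpa [hammingBall, Nat.lt_succ_iff, hammingNorm] using hy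
    _ ≤ ∑ i ∈ range (r + 1), #(powersetCard i (univ : Finset ι)) := card_biUnion_le
    _ = ∑ i ∈ range (r + 1), (Fintype.card ι).choose i := by simp

end HammingBall

section Greedy

variable {ι K : Type*} [Fintype ι] [Field K] [DecidableEq K]

theorem forall_lt_hammingNorm_sup_span_singleton {C : Submodule K (ι → K)} {r : ℕ} {x : ι → K}
    (hC : ∀ w ∈ C, w ≠ 0 → r < hammingNorm w) (hx : ∀ c ∈ C, r < hammingNorm (x + c)) :
    ∀ w ∈ C ⊔ K ∙ x, w ≠ 0 → r < hammingNorm w := by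
  intro w hw hw0
  obtain ⟨c, hc, _, hax, rfl⟩ := Submodule.mem_sup.mp hw
  obtain ⟨a, rfl⟩ := Submodule.mem_span_singleton.mp hax
  rcases eq_or_ne a 0 with rfl | ha
  · simp only [zero_smul, add_zero] at hw0 ⊢
    exact hC c hc hw0
  · calc r < hammingNorm (x + a⁻¹ • c) := hx _ (C.smul_mem _ hc)
      _ = hammingNorm (a⁻¹ • (c + a • x)) := by
        rw [smul_add, smul_smul, inv_mul_cancel₀ ha, one_smul, add_comm]
      _ ≤ hammingNorm (c + a • x) := hammingNorm_smul_le_hammingNorm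

variable [DecidableEq ι] [Fintype K]

theorem exists_forall_lt_hammingNorm_add (C : Submodule K (ι → K)) (r : ℕ)
    (hcard : Fintype.card K ^ finrank K C * #(hammingBall r : Finset (ι → K)) <
      Fintype.card K ^ Fintype.card ι) :
    ∃ x : ι → K, ∀ c ∈ C, r < hammingNorm (x + c) := by
  classical
  let codewords : Finset (ι → K) := univ.image ((↑) : C → ι → K)
  have hcover : #(codewords + hammingBall r) < #(univ : Finset (ι → K)) := calc
    #(codewords + hammingBall r) ≤ #codewords * #(hammingBall r : Finset (ι → K)) := card_add_le
    _ ≤ Fintype.card C * #(hammingBall r : Finset (ι → K)) := by gcongr; exact card_image_le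
    _ < _ := by rwa [card_eq_pow_finrank (K := K), card_univ, Fintype.card_fun]
  obtain ⟨x, -, hx⟩ := exists_mem_notMem_of_card_lt_card hcover
  refine ⟨x, fun c hc => not_le.mp fun hle => hx ?_⟩
  refine mem_add.mpr ⟨-c, ?_, x + c, by simpa [hammingBall] using hle, by abel⟩
  exact mem_image.mpr ⟨⟨-c, C.neg_mem hc⟩, mem_univ _, rfl⟩

theorem exists_submodule_finrank_eq_forall_lt_hammingNorm (r : ℕ) :
    ∀ k : ℕ, Fintype.card K ^ k * #(hammingBall r : Finset (ι → K)) ≤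
      Fintype.card K ^ Fintype.card ι →
    ∃ C : Submodule K (ι → K), finrank K C = k ∧ ∀ w ∈ C, w ≠ 0 → r < hammingNorm w
  | 0, _ => ⟨⊥, finrank_bot K _, fun w hw hw0 => absurd ((Submodule.mem_bot K).mp hw) hw0⟩
  | k + 1, hk => by
    have hball : 0 < #(hammingBall r : Finset (ι → K)) :=
      card_pos.mpr ⟨0, by simp [hammingBall]⟩
    have hlt : Fintype.card K ^ k * #(hammingBall r : Finset (ι → K)) <
        Fintype.card K ^ Fintype.card ι :=
      lt_of_lt_of_le (by gcongr; exacts [Fintype.one_lt_card, k.lt_succ_self]) hk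
    obtain ⟨C, hCk, hC⟩ := exists_submodule_finrank_eq_forall_lt_hammingNorm r k hlt.le
    obtain ⟨x, hx⟩ := exists_forall_lt_hammingNorm_add C r (hCk ▸ hlt)
    have hxC : x ∉ C := fun hxC => by simpa using hx (-x) (C.neg_mem hxC)
    exact ⟨C ⊔ K ∙ x, by rw [Submodule.finrank_sup_span_singleton hxC, hCk],
      forall_lt_hammingNorm_sup_span_singleton hC hx⟩

end Greedy

section Entropy

open Real

theorem binaryEntropy_eq_binEntropy_div_log_two (δ : ℝ) :
    binaryEntropy δ = binEntropy δ / log 2 := by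
  rw [binaryEntropy, binEntropy, logb, logb, log_inv, log_inv]
  ring

theorem binaryEntropy_le_one (δ : ℝ) : binaryEntropy δ ≤ 1 := by
  rw [binaryEntropy_eq_binEntropy_div_log_two, div_le_one (log_pos one_lt_two)]
  exact binEntropy_le_log_two

theorem binaryEntropy_lt_one {δ : ℝ} (hδ : δ ≠ 1 / 2) : binaryEntropy δ < 1 := by
  rw [binaryEntropy_eq_binEntropy_div_log_two, div_lt_one (log_pos one_lt_two)]
  exact binEntropy_lt_log_two.mpr (by simpa using hδ)

variable {δ : ℝ}

theorem rpow_mul_one_sub_rpow_eq_two_rpow_neg_binaryEntropy (hδ₀ : 0 < δ) (hδ₁ : δ < 1) (x : ℝ) :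
    δ ^ (δ * x) * (1 - δ) ^ ((1 - δ) * x) = 2 ^ (-(binaryEntropy δ * x)) := by
  rw [rpow_def_of_pos hδ₀, rpow_def_of_pos (sub_pos.mpr hδ₁), rpow_def_of_pos two_pos,
    ← exp_add, binaryEntropy, logb, logb]
  congr 1
  field_simp
  ring

theorem rpow_mul_one_sub_rpow_sub_anti (hδ₀ : 0 < δ) (hδ : δ ≤ 1 / 2) (x : ℝ) {a b : ℝ}
    (hab : a ≤ b) : δ ^ b * (1 - δ) ^ (x - b) ≤ δ ^ a * (1 - δ) ^ (x - a) := by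
  have hδ' : 0 < 1 - δ := by linarith
  rw [rpow_def_of_pos hδ₀, rpow_def_of_pos hδ', rpow_def_of_pos hδ₀, rpow_def_of_pos hδ',
    ← exp_add, ← exp_add, exp_le_exp]
  nlinarith [log_le_log hδ₀ (by linarith : δ ≤ 1 - δ)]

theorem sum_range_choose_le_two_rpow_binaryEntropy (hδ₀ : 0 < δ) (hδ : δ ≤ 1 / 2) (N : ℕ) :
    (∑ i ∈ range (⌊δ * N⌋₊ + 1), N.choose i : ℝ) ≤ 2 ^ (binaryEntropy δ * N) := by
  have hδ' : 0 < 1 - δ := by linarith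
  set p : ℝ := 2 ^ (-(binaryEntropy δ * N))
  have hterm : ∀ i ∈ range (⌊δ * N⌋₊ + 1), p ≤ δ ^ i * (1 - δ) ^ (N - i) := by
    intro i hi
    have hiδ : (i : ℝ) ≤ δ * N :=
      (Nat.le_floor_iff (by positivity)).mp (Nat.lt_succ_iff.mp (mem_range.mp hi))
    have hiN : i ≤ N := by exact_mod_cast hiδ.trans (by nlinarith : δ * N ≤ N)
    calc p = δ ^ (δ * N) * (1 - δ) ^ ((1 - δ) * N) :=
          (rpow_mul_one_sub_rpow_eq_two_rpow_neg_binaryEntropy hδ₀ (by linarith) N).symm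
      _ = δ ^ (δ * N) * (1 - δ) ^ (N - δ * N) := by ring_nf
      _ ≤ δ ^ (i : ℝ) * (1 - δ) ^ ((N : ℝ) - i) :=
          rpow_mul_one_sub_rpow_sub_anti hδ₀ hδ N hiδ
      _ = δ ^ i * (1 - δ) ^ (N - i) := by
          rw [← Nat.cast_sub hiN, rpow_natCast, rpow_natCast]
  have hmass : ∑ i ∈ range (⌊δ * N⌋₊ + 1), N.choose i * p ≤ 1 := calc
    _ ≤ ∑ i ∈ range (⌊δ * N⌋₊ + 1), δ ^ i * (1 - δ) ^ (N - i) * N.choose i := by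
        refine sum_le_sum fun i hi => ?_
        rw [mul_comm]
        exact mul_le_mul_of_nonneg_right (hterm i hi) (Nat.cast_nonneg _)
    _ ≤ ∑ i ∈ range (N + 1), δ ^ i * (1 - δ) ^ (N - i) * N.choose i := by
        refine sum_le_sum_of_subset_of_nonneg (range_subset_range.mpr ?_) fun i _ _ => by positivity
        exact Nat.succ_le_succ (Nat.floor_le_of_le (by nlinarith))
    _ = 1 := by rw [← add_pow]; simp
  rw [← sum_mul, ← le_div_iff₀ (by positivity), one_div, ← rpow_neg two_pos.le, neg_neg] at hmass
  exact_mod_cast hmass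

end Entropy

theorem exists_code_finrank_eq_floor (δ : ℝ) (hδ₀ : 0 < δ) (hδ : δ ≤ 1 / 2) (N : ℕ) :
    ∃ C : Submodule (ZMod 2) (Fin N → ZMod 2),
      finrank (ZMod 2) C = ⌊(1 - binaryEntropy δ) * N⌋₊ ∧
      ∀ w ∈ C, w ≠ 0 → δ * N ≤ (hammingNorm w : ℝ) := by
  set k := ⌊(1 - binaryEntropy δ) * N⌋₊
  set r := ⌊δ * N⌋₊
  have hk : (k : ℝ) ≤ (1 - binaryEntropy δ) * N :=
    Nat.floor_le (mul_nonneg (sub_nonneg.mpr (binaryEntropy_le_one δ)) N.cast_nonneg)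
  have hvolume : 2 ^ k * #(hammingBall r : Finset (Fin N → ZMod 2)) ≤ 2 ^ N := by
    have hball : (#(hammingBall r : Finset (Fin N → ZMod 2)) : ℝ) ≤
        2 ^ (binaryEntropy δ * N) := by
      have hcard := card_hammingBall_zmod_two_le (ι := Fin N) r
      rw [Fintype.card_fin] at hcard
      calc (#(hammingBall r : Finset (Fin N → ZMod 2)) : ℝ)
          ≤ ∑ i ∈ range (r + 1), (N.choose i : ℝ) := by exact_mod_cast hcard
        _ ≤ 2 ^ (binaryEntropy δ * N) := sum_range_choose_le_two_rpow_binaryEntropy hδ₀ hδ N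
    have : (2 ^ k * #(hammingBall r : Finset (Fin N → ZMod 2)) : ℝ) ≤ 2 ^ N := calc
      _ ≤ (2 : ℝ) ^ (k : ℝ) * 2 ^ (binaryEntropy δ * N) := by
          rw [Real.rpow_natCast]
          gcongr
      _ ≤ (2 : ℝ) ^ (N : ℝ) := by
          rw [← Real.rpow_add two_pos]
          exact Real.rpow_le_rpow_of_exponent_le one_le_two (by linarith)
      _ = 2 ^ N := Real.rpow_natCast 2 N
    exact_mod_cast this
  obtain ⟨C, hCk, hC⟩ :=
    exists_submodule_finrank_eq_forall_lt_hammingNorm (ι := Fin N) (K := ZMod 2) r k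
      (by simpa using hvolume)
  refine ⟨C, hCk, fun w hw hw0 => (Nat.lt_floor_add_one (δ * N)).le.trans ?_⟩
  exact_mod_cast hC w hw hw0

theorem exists_code_of_length_ge (δ ε : ℝ) (hδ₀ : 0 < δ) (hδ : δ ≤ 1 / 2) (hε : 0 < ε) :
    ∃ N₀ : ℕ, ∀ N : ℕ, N₀ ≤ N →
      ∃ C : Submodule (ZMod 2) (Fin N → ZMod 2),
        (1 - binaryEntropy δ - ε) * N ≤ (finrank (ZMod 2) C : ℝ) ∧
        ∀ w ∈ C, w ≠ 0 → δ * N ≤ (hammingNorm w : ℝ) := by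
  refine ⟨⌈ε⁻¹⌉₊, fun N hN => ?_⟩
  have hεN : 1 ≤ ε * N := by
    rw [← inv_le_iff_one_le_mul₀' hε]
    exact (Nat.le_ceil _).trans (by exact_mod_cast hN)
  obtain ⟨C, hCk, hC⟩ := exists_code_finrank_eq_floor δ hδ₀ hδ N
  refine ⟨C, ?_, hC⟩
  rw [hCk]
  linarith [Nat.sub_one_lt_floor ((1 - binaryEntropy δ) * N)]

/-- Gilbert–Varshamov existence of asymptotically good binary linear codes:
for every `δ ∈ (0, 1/2)` and `ε > 0`, for all sufficiently large `N` there is a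
binary linear code `C ⊆ F₂^N` with `dim C ≥ (1 − H(δ) − ε)·N` and
`dist(C) ≥ δ·N`. In particular, there exists a family of binary linear codes
`C_i ⊆ F₂^{N_i}` with `N_i → ∞` whose rates and relative distances are bounded
below by positive constants, i.e. an asymptotically good family. -/
theorem gilbert_varshamov :
    (∀ δ ε : ℝ, 0 < δ → δ < 1 / 2 → 0 < ε →
      ∃ N₀ : ℕ, ∀ N : ℕ, N₀ ≤ N →
        ∃ C : Submodule (ZMod 2) (Fin N → ZMod 2),
          (1 - binaryEntropy δ - ε) * N ≤ (finrank (ZMod 2) C : ℝ) ∧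
          ∀ w ∈ C, w ≠ 0 → δ * N ≤ (hammingNorm w : ℝ)) ∧
    ∃ r₀ δ₀ : ℝ, 0 < r₀ ∧ 0 < δ₀ ∧
      ∃ Ni : ℕ → ℕ, Filter.Tendsto Ni Filter.atTop Filter.atTop ∧
        ∀ i : ℕ, ∃ C : Submodule (ZMod 2) (Fin (Ni i) → ZMod 2),
          r₀ * Ni i ≤ (finrank (ZMod 2) C : ℝ) ∧
          ∀ w ∈ C, w ≠ 0 → δ₀ * Ni i ≤ (hammingNorm w : ℝ) := by
  refine ⟨fun δ ε hδ₀ hδ hε => exists_code_of_length_ge δ ε hδ₀ hδ.le hε, ?_⟩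
  have hH := binaryEntropy_lt_one (δ := 1 / 4) (by norm_num)
  set r₀ := (1 - binaryEntropy (1 / 4)) / 2 with hr₀
  have hr₀_pos : 0 < r₀ := by linarith
  obtain ⟨N₀, hN₀⟩ := exists_code_of_length_ge (1 / 4) r₀ (by norm_num) (by norm_num) hr₀_pos
  refine ⟨r₀, 1 / 4, hr₀_pos, by norm_num, (N₀ + ·), ?_, fun i => ?_⟩
  · exact Filter.tendsto_atTop_mono (Nat.le_add_left · N₀) Filter.tendsto_id
  obtain ⟨C, hCk, hC⟩ := hN₀ (N₀ + i) (Nat.le_add_right _ _)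
  exact ⟨C, by convert hCk using 2; ring, hC⟩
end
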